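/- arXiv:1507.02092 — 6 statements merged into one kernel-verified Lean document; each statement's English description precedes it below -/
import Mathlib

section
/- For every natural number n, the determinant of the 22×22 symmetric integer matrix M(n) equals −(4n+3)². -/
/-!
Symmetric Gaussian elimination `M = L D Lᵀ`, with `L` unitriangular for a suitable elimination
order, gives the determinant as the product of the pivots. Read as a graph on the vertices
`0, …, 21`, the `-2`-block of `M` contains two `E₇` diagrams (vertices `3–9` and `10–16`) and an
`A₃` diagram (vertices `17–19`). Eliminating them leaf first creates no fill-in: each pivot is `-2`
minus the reciprocals of the pivots of its eliminated neighbours, so the `E₇`s contribute `-2`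
each and the `A₃` contributes `-4`. With the pivots `-2, 1/2, -1/4` of the vertices `0, 1, 2`
the first twenty pivots multiply to `-4`, and the last two are both `-(4n+3)/2`.
-/

/-- The intersection (Gram) matrix of the Néron–Severi lattice of the supersingular K3
surface $X(p)$ of Artin invariant one for $p = 4n+3$, in the basis given in the paper. -/
def M (n : ℕ) : Matrix (Fin 22) (Fin 22) ℤ :=
  Matrix.of ![
    ![-2, 1, 0, 0, 0, 0, 0, 0, 0, 0, 0, 0, 0, 0, 0, 0, 0, 0, 0, 0, (n : ℤ), (n : ℤ)],
    ![1, 0, 1, 0, 0, 0, 0, 0, 0, 0, 0, 0, 0, 0, 0, 0, 0, 0, 0, 0, 1, 1],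
    ![0, 1, -2, 1, 0, 0, 0, 0, 0, 0, 1, 0, 0, 0, 0, 0, 0, 0, 1, 0, (n : ℤ), (n : ℤ)],
    ![0, 0, 1, -2, 1, 0, 0, 0, 0, 0, 0, 0, 0, 0, 0, 0, 0, 0, 0, 0, 1, 1],
    ![0, 0, 0, 1, -2, 1, 0, 0, 0, 0, 0, 0, 0, 0, 0, 0, 0, 0, 0, 0, 0, 0],
    ![0, 0, 0, 0, 1, -2, 1, 0, 0, 0, 0, 0, 0, 0, 0, 0, 0, 0, 0, 0, 0, 0],
    ![0, 0, 0, 0, 0, 1, -2, 1, 1, 0, 0, 0, 0, 0, 0, 0, 0, 0, 0, 0, 0, 0],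
    ![0, 0, 0, 0, 0, 0, 1, -2, 0, 0, 0, 0, 0, 0, 0, 0, 0, 0, 0, 0, 0, 0],
    ![0, 0, 0, 0, 0, 0, 1, 0, -2, 1, 0, 0, 0, 0, 0, 0, 0, 0, 0, 0, 0, 0],
    ![0, 0, 0, 0, 0, 0, 0, 0, 1, -2, 0, 0, 0, 0, 0, 0, 0, 0, 0, 0, 0, 0],
    ![0, 0, 1, 0, 0, 0, 0, 0, 0, 0, -2, 1, 0, 0, 0, 0, 0, 0, 0, 0, 0, 0],
    ![0, 0, 0, 0, 0, 0, 0, 0, 0, 0, 1, -2, 1, 0, 0, 0, 0, 0, 0, 0, 0, 0],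
    ![0, 0, 0, 0, 0, 0, 0, 0, 0, 0, 0, 1, -2, 1, 0, 0, 0, 0, 0, 0, 0, 0],
    ![0, 0, 0, 0, 0, 0, 0, 0, 0, 0, 0, 0, 1, -2, 1, 1, 0, 0, 0, 0, 0, 0],
    ![0, 0, 0, 0, 0, 0, 0, 0, 0, 0, 0, 0, 0, 1, -2, 0, 0, 0, 0, 0, 0, 0],
    ![0, 0, 0, 0, 0, 0, 0, 0, 0, 0, 0, 0, 0, 1, 0, -2, 1, 0, 0, 0, 0, 0],
    ![0, 0, 0, 0, 0, 0, 0, 0, 0, 0, 0, 0, 0, 0, 0, 1, -2, 0, 0, 0, 0, 0],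
    ![0, 0, 0, 0, 0, 0, 0, 0, 0, 0, 0, 0, 0, 0, 0, 0, 0, -2, 1, 1, 0, 0],
    ![0, 0, 1, 0, 0, 0, 0, 0, 0, 0, 0, 0, 0, 0, 0, 0, 0, 1, -2, 0, 0, 0],
    ![0, 0, 0, 0, 0, 0, 0, 0, 0, 0, 0, 0, 0, 0, 0, 0, 0, 1, 0, -2, 1, 0],
    ![(n : ℤ), 1, (n : ℤ), 1, 0, 0, 0, 0, 0, 0, 0, 0, 0, 0, 0, 0, 0, 0, 0, 1, -2, (2*n : ℤ)],
    ![(n : ℤ), 1, (n : ℤ), 1, 0, 0, 0, 0, 0, 0, 0, 0, 0, 0, 0, 0, 0, 0, 0, 0, (2*n : ℤ), -2]]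


open Matrix

namespace Matrix

variable {ι α R : Type*} [Fintype ι] [DecidableEq ι] [LinearOrder α] [CommRing R]

theorem BlockTriangular.det_eq_prod_diag_of_injective {A : Matrix ι ι R} {b : ι → α}
    (hA : A.BlockTriangular b) (hb : Function.Injective b) : A.det = ∏ i, A i i := by
  rw [hA.det, Finset.prod_image fun i _ j _ h => hb h]
  refine Finset.prod_congr rfl fun i _ => ?_
  have : Subsingleton {j // b j = b i} := ⟨fun j k => Subtype.ext (hb (j.2.trans k.2.symm))⟩
  exact det_eq_elem_of_subsingleton (A.toSquareBlock b (b i)) ⟨i, rfl⟩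

theorem BlockTriangular.det_mul_diagonal_mul_transpose {L : Matrix ι ι R} {b : ι → α}
    (hL : L.BlockTriangular b) (hb : Function.Injective b) (hL1 : ∀ i, L i i = 1) (d : ι → R) :
    (L * diagonal d * Lᵀ).det = ∏ i, d i := by
  simp [det_mul, hL.det_eq_prod_diag_of_injective hb, hL1]

end Matrix

def eliminationStep : Fin 22 → ℕ :=
  ![17, 18, 19, 6, 5, 4, 3, 0, 2, 1, 13, 12, 11, 10, 7, 9, 8, 14, 15, 16, 20, 21]

def eliminationFactor (n : ℕ) : Matrix (Fin 22) (Fin 22) ℚ :=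
  Matrix.of ![
    ![1, 0, 0, 0, 0, 0, 0, 0, 0, 0, 0, 0, 0, 0, 0, 0, 0, 0, 0, 0, 0, 0],
    ![-1/2, 1, 0, 0, 0, 0, 0, 0, 0, 0, 0, 0, 0, 0, 0, 0, 0, 0, 0, 0, 0, 0],
    ![0, 2, 1, -3/2, 0, 0, 0, 0, 0, 0, -3/2, 0, 0, 0, 0, 0, 0, 0, -2/3, -1/4, 0, 0],
    ![0, 0, 0, 1, -4/3, 0, 0, 0, 0, 0, 0, 0, 0, 0, 0, 0, 0, 0, 0, 0, 0, 0],
    ![0, 0, 0, 0, 1, -5/4, 0, 0, 0, 0, 0, 0, 0, 0, 0, 0, 0, 0, 0, 0, 0, 0],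
    ![0, 0, 0, 0, 0, 1, -6/5, 0, 0, 0, 0, 0, 0, 0, 0, 0, 0, 0, 0, 0, 0, 0],
    ![0, 0, 0, 0, 0, 0, 1, -1/2, -2/3, 0, 0, 0, 0, 0, 0, 0, 0, 0, 0, 0, 0, 0],
    ![0, 0, 0, 0, 0, 0, 0, 1, 0, 0, 0, 0, 0, 0, 0, 0, 0, 0, 0, 0, 0, 0],
    ![0, 0, 0, 0, 0, 0, 0, 0, 1, -1/2, 0, 0, 0, 0, 0, 0, 0, 0, 0, 0, 0, 0],
    ![0, 0, 0, 0, 0, 0, 0, 0, 0, 1, 0, 0, 0, 0, 0, 0, 0, 0, 0, 0, 0, 0],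
    ![0, 0, 0, 0, 0, 0, 0, 0, 0, 0, 1, -4/3, 0, 0, 0, 0, 0, 0, 0, 0, 0, 0],
    ![0, 0, 0, 0, 0, 0, 0, 0, 0, 0, 0, 1, -5/4, 0, 0, 0, 0, 0, 0, 0, 0, 0],
    ![0, 0, 0, 0, 0, 0, 0, 0, 0, 0, 0, 0, 1, -6/5, 0, 0, 0, 0, 0, 0, 0, 0],
    ![0, 0, 0, 0, 0, 0, 0, 0, 0, 0, 0, 0, 0, 1, -1/2, -2/3, 0, 0, 0, 0, 0, 0],
    ![0, 0, 0, 0, 0, 0, 0, 0, 0, 0, 0, 0, 0, 0, 1, 0, 0, 0, 0, 0, 0, 0],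
    ![0, 0, 0, 0, 0, 0, 0, 0, 0, 0, 0, 0, 0, 0, 0, 1, -1/2, 0, 0, 0, 0, 0],
    ![0, 0, 0, 0, 0, 0, 0, 0, 0, 0, 0, 0, 0, 0, 0, 0, 1, 0, 0, 0, 0, 0],
    ![0, 0, 0, 0, 0, 0, 0, 0, 0, 0, 0, 0, 0, 0, 0, 0, 0, 1, 0, 0, 0, 0],
    ![0, 0, 0, 0, 0, 0, 0, 0, 0, 0, 0, 0, 0, 0, 0, 0, 0, -1/2, 1, 0, 0, 0],
    ![0, 0, 0, 0, 0, 0, 0, 0, 0, 0, 0, 0, 0, 0, 0, 0, 0, -1/2, -1/3, 1, 0, 0],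
    ![-(n : ℚ) / 2, (n : ℚ) + 2, 1, -3/2, 0, 0, 0, 0, 0, 0, 0, 0, 0, 0, 0, 0, 0, 0, 0, -3/4, 1, 0],
    ![-(n : ℚ) / 2, (n : ℚ) + 2, 2, -3/2, 0, 0, 0, 0, 0, 0, 0, 0, 0, 0, 0, 0, 0, 0, 0, 0, 0, 1]]

def pivots (n : ℕ) : Fin 22 → ℚ :=
  ![-2, 1/2, -1/4, -2/3, -3/4, -4/5, -5/6, -2, -3/2, -2, -2/3, -3/4, -4/5, -5/6, -2, -3/2, -2, -2,
    -3/2, -4/3, -(4 * n + 3) / 2, -(4 * n + 3) / 2]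

theorem eliminationStep_injective : Function.Injective eliminationStep := by decide

theorem eliminationFactor_blockTriangular (n : ℕ) :
    (eliminationFactor n).BlockTriangular (OrderDual.toDual ∘ eliminationStep) := by
  intro i j h
  fin_cases i <;> fin_cases j <;> first | rfl | exact absurd h (by decide)

theorem eliminationFactor_diag (n : ℕ) (i : Fin 22) : eliminationFactor n i i = 1 := by
  fin_cases i <;> rfl

set_option maxHeartbeats 0 in
theorem map_intCast_M_eq (n : ℕ) :
    (M n).map (Int.cast : ℤ → ℚ) =
      eliminationFactor n * diagonal (pivots n) * (eliminationFactor n)ᵀ := by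
  ext i j
  rw [mul_apply]
  simp only [mul_diagonal, transpose_apply, map_apply, Fin.sum_univ_succ, Fin.sum_univ_zero]
  fin_cases i <;> fin_cases j <;>
    simp only [M, eliminationFactor, pivots, of_apply, cons_val, Fin.reduceFinMk, Fin.zero_eta,
      Fin.mk_one] <;>
    push_cast <;> ring

theorem prod_pivots (n : ℕ) : ∏ i, pivots n i = -(4 * n + 3) ^ 2 := by
  simp only [pivots, Fin.prod_univ_succ, Fin.prod_univ_zero, cons_val_zero, cons_val_succ]
  ring

/-- For every natural number `n`, the determinant of the 22×22 symmetric integer matrix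
`M n` equals `-(4n+3)^2`. -/
theorem det_M (n : ℕ) : (M n).det = -(4 * n + 3) ^ 2 := by
  have h : ((M n).det : ℚ) = ∏ i, pivots n i := by
    rw [Int.cast_det, map_intCast_M_eq]
    exact (eliminationFactor_blockTriangular n).det_mul_diagonal_mul_transpose
      (OrderDual.toDual.injective.comp eliminationStep_injective) (eliminationFactor_diag n) _
  exact_mod_cast h.trans (prod_pivots n)
end

section
/- For every natural number n, no complex root of the degree-22 monic integer polynomial μ_n is a root of unity; equivalently, μ_n is not divisible by any cyclotomic polynomial. -/
/-!
For `z ≠ 0` we have `μ(z) = z ^ 11 * g_n(z + z⁻¹)`, so `μ` is determined by `g_n`. If a root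
of `μ` has order `m`, then `Φ_m ∣ μ`, hence `φ(m) ≤ 22`, which leaves 43 values of `m`. For
`m = 2` the root would be `-1`, but `g_n(-2) = -(4n + 5)²`. For each other `m` we reduce modulo
a prime `p` having an element `t` of order `m`: then `t` is a root of `μ mod p`, i.e.
`g_n(t + t⁻¹) ≡ 0 (mod p)`, and a finite check over the residues of `n` modulo `p` rules this
out.
-/

open Polynomial in
/-- The degree-11 integer polynomial `g n` from the paper. -/
noncomputable def g (n : ℕ) : Polynomial ℤ :=
  X ^ 11
    + C (-16 * (n : ℤ) ^ 3 - 92 * n ^ 2 - 150 * n - 69) * X ^ 10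
    + C (-24 * (n : ℤ) ^ 3 - 120 * n ^ 2 - 182 * n - 91) * X ^ 9
    + C (148 * (n : ℤ) ^ 3 + 849 * n ^ 2 + 1426 * n + 670) * X ^ 8
    + C (206 * (n : ℤ) ^ 3 + 1014 * n ^ 2 + 1600 * n + 770) * X ^ 7
    + C (-466 * (n : ℤ) ^ 3 - 2689 * n ^ 2 - 4681 * n - 2253) * X ^ 6
    + C (-568 * (n : ℤ) ^ 3 - 2749 * n ^ 2 - 4587 * n - 2245) * X ^ 5
    + C (578 * (n : ℤ) ^ 3 + 3415 * n ^ 2 + 6196 * n + 3062) * X ^ 4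
    + C (534 * (n : ℤ) ^ 3 + 2526 * n ^ 2 + 4605 * n + 2359) * X ^ 3
    + C (-232 * (n : ℤ) ^ 3 - 1474 * n ^ 2 - 2854 * n - 1464) * X ^ 2
    + C (-88 * (n : ℤ) ^ 3 - 392 * n ^ 2 - 976 * n - 574) * X
    + C (8 * (n : ℤ) ^ 2 + 88 * n + 67)

open Polynomial Finset
open scoped Nat

namespace Polynomial

variable {R : Type*} [CommRing R]

/-- `X ^ d * q (X + X⁻¹)`, a polynomial when `q.natDegree ≤ d`. -/
noncomputable def palindromize (d : ℕ) (q : R[X]) : R[X] :=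
  ∑ i ∈ range (d + 1), C (q.coeff i) * X ^ (d - i) * (X ^ 2 + 1) ^ i

theorem aeval_palindromize {K : Type*} [Field K] [Algebra R K] {d : ℕ} {q : R[X]}
    (hq : q.natDegree ≤ d) {z : K} (hz : z ≠ 0) :
    aeval z (palindromize d q) = z ^ d * aeval (z + z⁻¹) q := by
  have hsq : z * (z + z⁻¹) = z ^ 2 + 1 := by field_simp
  rw [aeval_eq_sum_range' (Nat.lt_succ_of_le hq), mul_sum, palindromize, map_sum]
  refine sum_congr rfl fun i hi => ?_
  obtain ⟨e, rfl⟩ := Nat.exists_eq_add_of_le' (Nat.le_of_lt_succ (mem_range.mp hi))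
  simp only [map_mul, map_pow, aeval_C, aeval_X, map_add, map_one, ← hsq, mul_pow,
    Nat.add_sub_cancel, Algebra.smul_def]
  ring

theorem eq_of_aeval_eq_of_ne_zero {K : Type*} [Field K] [Infinite K] [Algebra R K]
    [FaithfulSMul R K] {p q : R[X]} (h : ∀ z : K, z ≠ 0 → aeval z p = aeval z q) : p = q := by
  refine map_injective _ (FaithfulSMul.algebraMap_injective R K) <|
    eq_of_infinite_eval_eq _ _ <| (Set.finite_singleton 0).infinite_compl.mono fun z hz => ?_
  simpa only [Set.mem_ofPred_eq, eval_map_algebraMap] using h z hz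

theorem not_cyclotomic_dvd_palindromize {K : Type*} [Field K] [Algebra R K] {d m : ℕ}
    {q : R[X]} (hq : q.natDegree ≤ d) (hm : 0 < m) {t : K} (ht : IsPrimitiveRoot t m)
    (hqt : aeval (t + t⁻¹) q ≠ 0) : ¬ cyclotomic m R ∣ palindromize d q := by
  intro hdvd
  have hroot : aeval t (cyclotomic m R) = 0 := by
    rw [aeval_def, eval₂_eq_eval_map, map_cyclotomic]
    exact ht.isRoot_cyclotomic hm
  have ht0 : t ≠ 0 := ht.ne_zero hm.ne'
  have := aeval_eq_zero_of_dvd_aeval_eq_zero hdvd hroot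
  rw [aeval_palindromize hq ht0] at this
  exact hqt ((mul_eq_zero.mp this).resolve_left (pow_ne_zero d ht0))

end Polynomial

theorem IsPrimitiveRoot.cyclotomic_dvd_of_aeval_eq_zero {K : Type*} [Field K] [CharZero K]
    {z : K} {m : ℕ} (hz : IsPrimitiveRoot z m) (hm : 0 < m) {f : ℤ[X]} (hf : aeval z f = 0) :
    cyclotomic m ℤ ∣ f := by
  rw [cyclotomic_eq_minpoly hz hm]
  exact minpoly.isIntegrallyClosed_dvd (hz.isIntegral hm) hf

theorem natDegree_g_le (n : ℕ) : (g n).natDegree ≤ 11 := by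
  unfold g; compute_degree

/-- `g n` evaluated at `x`, with `n` replaced by an element `c` of an arbitrary ring. -/
def gEval {R : Type*} [CommRing R] (c x : R) : R :=
  x ^ 11
    + (-16 * c ^ 3 - 92 * c ^ 2 - 150 * c - 69) * x ^ 10
    + (-24 * c ^ 3 - 120 * c ^ 2 - 182 * c - 91) * x ^ 9
    + (148 * c ^ 3 + 849 * c ^ 2 + 1426 * c + 670) * x ^ 8
    + (206 * c ^ 3 + 1014 * c ^ 2 + 1600 * c + 770) * x ^ 7
    + (-466 * c ^ 3 - 2689 * c ^ 2 - 4681 * c - 2253) * x ^ 6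
    + (-568 * c ^ 3 - 2749 * c ^ 2 - 4587 * c - 2245) * x ^ 5
    + (578 * c ^ 3 + 3415 * c ^ 2 + 6196 * c + 3062) * x ^ 4
    + (534 * c ^ 3 + 2526 * c ^ 2 + 4605 * c + 2359) * x ^ 3
    + (-232 * c ^ 3 - 1474 * c ^ 2 - 2854 * c - 1464) * x ^ 2
    + (-88 * c ^ 3 - 392 * c ^ 2 - 976 * c - 574) * x
    + (8 * c ^ 2 + 88 * c + 67)

theorem map_gEval {R S : Type*} [CommRing R] [CommRing S] (f : R →+* S) (c x : R) :
    f (gEval c x) = gEval (f c) (f x) := by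
  simp only [gEval, map_add, map_sub, map_mul, map_pow, map_neg, map_ofNat]

theorem aeval_g {R : Type*} [CommRing R] (n : ℕ) (x : R) : aeval x (g n) = gEval (n : R) x := by
  simp only [g, gEval, map_add, map_sub, map_mul, map_pow, map_neg, map_ofNat, map_natCast,
    aeval_X]

theorem not_cyclotomic_two_dvd (n : ℕ) : ¬ cyclotomic 2 ℤ ∣ palindromize 11 (g n) := by
  refine not_cyclotomic_dvd_palindromize (natDegree_g_le n) two_pos
    (IsPrimitiveRoot.neg_one (R := ℚ) 0 (by norm_num)) ?_
  have : gEval (n : ℚ) (-1 + (-1)⁻¹) = -(4 * n + 5) ^ 2 := by norm_num [gEval]; ring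
  rw [aeval_g, this, neg_ne_zero]
  positivity

/-- `t` has order `m` modulo the prime `p` (with inverse `t ^ (m - 1)`), and
`g_c (t + t⁻¹) ≢ 0 (mod p)` for every residue `c`. -/
def IsCertificate (m p t : ℕ) : Prop :=
  0 < m ∧ p.Prime ∧ t ^ m % p = 1 ∧ (∀ l < m, 0 < l → t ^ l % p ≠ 1) ∧
    ∀ c < p, gEval (c : ℤ) (t + t ^ (m - 1)) % p ≠ 0

instance (m p t : ℕ) : Decidable (IsCertificate m p t) := by
  unfold IsCertificate; infer_instance

theorem not_cyclotomic_dvd_of_isCertificate {m p t : ℕ} (h : IsCertificate m p t) (n : ℕ) :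
    ¬ cyclotomic m ℤ ∣ palindromize 11 (g n) := by
  obtain ⟨hm, hp, hpow, hmin, hg⟩ := h
  have : Fact p.Prime := ⟨hp⟩
  have htm : (t : ZMod p) ^ m = 1 := by
    rw [← Nat.cast_pow, ← ZMod.natCast_mod, hpow, Nat.cast_one]
  have ht : IsPrimitiveRoot (t : ZMod p) m := by
    refine IsPrimitiveRoot.mk_of_lt _ hm htm fun l hl0 hlm htl => hmin l hlm hl0 ?_
    rw [← Nat.cast_pow, ← Nat.cast_one, ZMod.natCast_eq_natCast_iff'] at htl
    rw [htl, Nat.one_mod_eq_one.mpr hp.one_lt.ne']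
  refine not_cyclotomic_dvd_palindromize (natDegree_g_le n) hm ht ?_
  have hinv : (t : ZMod p)⁻¹ = (t : ZMod p) ^ (m - 1) :=
    inv_eq_of_mul_eq_one_right (by rw [← pow_succ', Nat.sub_add_cancel hm, htm])
  rw [hinv, aeval_g, ← ZMod.natCast_mod n p]
  intro h0
  apply hg (n % p) (Nat.mod_lt n hp.pos)
  refine Int.emod_eq_zero_of_dvd ((ZMod.intCast_zmod_eq_zero_iff_dvd _ p).mp ?_)
  have hcast := map_gEval (Int.castRingHom (ZMod p)) ((n % p : ℕ) : ℤ) (t + t ^ (m - 1))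
  simp only [eq_intCast, Int.cast_natCast, Int.cast_add, Int.cast_pow] at hcast
  rw [hcast, h0]

def totientAtMost22 : List ℕ :=
  [1, 2, 3, 4, 5, 6, 7, 8, 9, 10, 11, 12, 13, 14, 15, 16, 17, 18, 19, 20, 21, 22, 23, 24, 25, 26,
    27, 28, 30, 32, 33, 34, 36, 38, 40, 42, 44, 46, 48, 50, 54, 60, 66]

theorem mul_mem_totientAtMost22 :
    ∀ a ∈ totientAtMost22, ∀ b ∈ totientAtMost22, a.Coprime b → φ a * φ b ≤ 22 →
      a * b ∈ totientAtMost22 := by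
  decide

set_option synthInstance.maxSize 2000 in
theorem prime_pow_mem_totientAtMost22 {p k : ℕ} (hp : p.Prime) (hk : 0 < k)
    (h : φ (p ^ k) ≤ 22) : p ^ k ∈ totientAtMost22 := by
  rw [Nat.totient_prime_pow hp hk] at h
  have hp1 : 1 ≤ p - 1 := Nat.le_sub_of_add_le hp.two_le
  have hpk : p ^ (k - 1) ≤ 22 := (Nat.le_mul_of_pos_right _ hp1).trans h
  have hp24 : p < 24 := by
    have := (Nat.le_mul_of_pos_left (p - 1) (pow_pos hp.pos (k - 1))).trans h
    omega
  have hk6 : k < 6 := by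
    by_contra! hk6
    have := (Nat.pow_le_pow_right (n := 2) two_pos (by omega : 5 ≤ k - 1)).trans
      ((Nat.pow_le_pow_left hp.two_le _).trans hpk)
    norm_num at this
  have key : ∀ p < 24, p.Prime → ∀ k < 6, 0 < k → p ^ (k - 1) * (p - 1) ≤ 22 →
      p ^ k ∈ totientAtMost22 := by
    decide
  exact key p hp24 hp k hk6 hk h

theorem mem_totientAtMost22 {m : ℕ} (hm : 0 < m) (h : φ m ≤ 22) : m ∈ totientAtMost22 := by
  induction m using Nat.recOnPosPrimePosCoprime with
  | prime_pow p k hp hk => exact prime_pow_mem_totientAtMost22 hp hk h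
  | zero => exact absurd hm (lt_irrefl 0)
  | one => decide
  | coprime a b ha hb hab iha ihb =>
    rw [Nat.totient_mul hab] at h
    have ha' : 0 < φ a := Nat.totient_pos.mpr (by omega)
    have hb' : 0 < φ b := Nat.totient_pos.mpr (by omega)
    exact mul_mem_totientAtMost22 a (iha (by omega) (by nlinarith))
      b (ihb (by omega) (by nlinarith)) hab h

/-- Triples `(m, p, t)`; none exists for `m = 2`, since `g_c(-2) = -(4c + 5)²` has a root modulo
every odd prime. -/
def certificates : List (ℕ × ℕ × ℕ) :=
  [(1, 2, 1), (3, 19, 7), (4, 17, 4), (5, 11, 5), (6, 19, 8), (7, 29, 7), (8, 17, 2), (9, 19, 4),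
    (10, 11, 2), (11, 23, 2), (12, 61, 21), (13, 53, 13), (14, 29, 9), (15, 61, 15),
    (16, 17, 10), (17, 103, 9), (18, 19, 3), (19, 191, 36), (20, 41, 2), (21, 43, 10),
    (22, 23, 7), (23, 47, 3), (24, 73, 7), (25, 101, 56), (26, 53, 4), (27, 109, 3),
    (28, 29, 3), (30, 31, 12), (32, 97, 19), (33, 67, 4), (34, 103, 22), (36, 37, 13),
    (38, 191, 31), (40, 41, 26), (42, 43, 3), (44, 89, 20), (46, 47, 5), (48, 97, 25),
    (50, 101, 4), (54, 109, 12), (60, 61, 10), (66, 67, 2)]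

set_option maxRecDepth 10000 in
theorem isCertificate_of_mem_certificates :
    ∀ e ∈ certificates, IsCertificate e.1 e.2.1 e.2.2 := by
  decide

theorem eq_two_or_mem_certificates :
    ∀ m ∈ totientAtMost22, m = 2 ∨ ∃ e ∈ certificates, e.1 = m := by
  decide

theorem no_root_of_unity_general (n : ℕ) (μ : Polynomial ℤ)
    (hdeg : μ.natDegree = 22)
    (hμ : ∀ z : ℂ, z ≠ 0 →
      Polynomial.aeval z μ = z ^ 11 * Polynomial.aeval (z + z⁻¹) (g n)) :
    ∀ z : ℂ, Polynomial.aeval z μ = 0 → ∀ k : ℕ, 0 < k → z ^ k ≠ 1 := by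
  intro z hz k hk hzk
  have hμg : μ = palindromize 11 (g n) := eq_of_aeval_eq_of_ne_zero fun w hw => by
    rw [hμ w hw, aeval_palindromize (natDegree_g_le n) hw]
  have hm : 0 < orderOf z := (isOfFinOrder_iff_pow_eq_one.mpr ⟨k, hk, hzk⟩).orderOf_pos
  have hdvd := (IsPrimitiveRoot.orderOf z).cyclotomic_dvd_of_aeval_eq_zero hm hz
  have htot : φ (orderOf z) ≤ 22 := by
    have hμ0 : μ ≠ 0 := fun h => by simp [h] at hdeg
    simpa only [natDegree_cyclotomic, hdeg] using natDegree_le_of_dvd hdvd hμ0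
  rw [hμg] at hdvd
  obtain h2 | ⟨e, he, hem⟩ := eq_two_or_mem_certificates _ (mem_totientAtMost22 hm htot)
  · exact not_cyclotomic_two_dvd n (h2 ▸ hdvd)
  · exact not_cyclotomic_dvd_of_isCertificate (isCertificate_of_mem_certificates e he) n
      (hem ▸ hdvd)

/-- For every natural number `n`, no complex root of the degree-22 monic integer polynomial
`μ n` (the unique monic polynomial of degree 22 with `μ n (x) = x^11 * g n (x + 1/x)` for all
`x ≠ 0`) is a root of unity. -/
theorem no_root_of_unity (n : ℕ) (μ : Polynomial ℤ) (hmonic : μ.Monic)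
    (hdeg : μ.natDegree = 22)
    (hμ : ∀ z : ℂ, z ≠ 0 →
      Polynomial.aeval z μ = z ^ 11 * Polynomial.aeval (z + z⁻¹) (g n)) :
    ∀ z : ℂ, Polynomial.aeval z μ = 0 → ∀ k : ℕ, 0 < k → z ^ k ≠ 1 :=
  no_root_of_unity_general n μ hdeg hμ
end

section
/- Let p = 4n+3 be a prime and let F be a field of characteristic p containing an element ζ with ζ⁴ = −1. Then in the rational function field F(t), the pairs P = (ζ²·t^{2n+3}(t−1), ζ³·t^{n+3}(t−1)^{2n+3}) and R = (−ζ²·t^{2n+3}(t−1), −ζ·t^{n+3}(t−1)^{2n+3}) both satisfy the Weierstrass equation y² = x³ + t³(t−1)²·x; i.e., P and R are affine points of the elliptic curve X over F(t). -/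
/-!
Write `u = t − 1`. Once `ζ⁴ = −1` turns `ζ⁶` into `−ζ²`, both equations come down to
`u^(4n+3) = t^(4n+3) − 1`, which is the Frobenius identity `(t − 1)^p = t^p − 1` in characteristic `p`.
-/

open RatFunc Polynomial

/-- The Weierstrass curve `X : y² = x³ + t³(t−1)²·x` over the rational function field `F(t)`. -/
noncomputable def XCurve (F : Type*) [Field F] : WeierstrassCurve (RatFunc F) where
  a₁ := 0
  a₂ := 0
  a₃ := 0
  a₄ := RatFunc.X ^ 3 * (RatFunc.X - 1) ^ 2
  a₆ := 0

theorem XCurve_equation_iff {F : Type*} [Field F] (x y : RatFunc F) :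
    (XCurve F).toAffine.Equation x y ↔
      y ^ 2 = x ^ 3 + RatFunc.X ^ 3 * (RatFunc.X - 1) ^ 2 * x := by
  rw [WeierstrassCurve.Affine.equation_iff]
  simp only [XCurve, zero_mul, add_zero]

section PointIdentities

variable {R : Type*} [CommRing R] {n : ℕ} {c T : R}

theorem P_equation_of_frobenius (hc : c ^ 4 = -1)
    (hT : (T - 1) ^ (4 * n + 3) = T ^ (4 * n + 3) - 1) :
    (c ^ 3 * T ^ (n + 3) * (T - 1) ^ (2 * n + 3)) ^ 2 =
      (c ^ 2 * T ^ (2 * n + 3) * (T - 1)) ^ 3 +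
        T ^ 3 * (T - 1) ^ 2 * (c ^ 2 * T ^ (2 * n + 3) * (T - 1)) := by
  linear_combination (c ^ 2 * (T ^ (2 * n + 6) * (T - 1) ^ (4 * n + 6)
      - T ^ (6 * n + 9) * (T - 1) ^ 3)) * hc - c ^ 2 * T ^ (2 * n + 6) * (T - 1) ^ 3 * hT

theorem R_equation_of_frobenius (hc : c ^ 4 = -1)
    (hT : (T - 1) ^ (4 * n + 3) = T ^ (4 * n + 3) - 1) :
    (-c * T ^ (n + 3) * (T - 1) ^ (2 * n + 3)) ^ 2 =
      (-c ^ 2 * T ^ (2 * n + 3) * (T - 1)) ^ 3 +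
        T ^ 3 * (T - 1) ^ 2 * (-c ^ 2 * T ^ (2 * n + 3) * (T - 1)) := by
  linear_combination c ^ 2 * T ^ (6 * n + 9) * (T - 1) ^ 3 * hc
    + c ^ 2 * T ^ (2 * n + 6) * (T - 1) ^ 3 * hT

end PointIdentities

/-- Let `p = 4n+3` be a prime and `F` a field of characteristic `p` containing `ζ` with
`ζ⁴ = −1`.  Then `P = (ζ²t^{2n+3}(t−1), ζ³t^{n+3}(t−1)^{2n+3})` and
`R = (−ζ²t^{2n+3}(t−1), −ζt^{n+3}(t−1)^{2n+3})` are affine points of the elliptic curve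
`X : y² = x³ + t³(t−1)²x` over `F(t)`. -/
theorem P_R_on_XCurve (p n : ℕ) (hp : p.Prime) (hpn : p = 4 * n + 3)
    (F : Type*) [Field F] [CharP F p] (ζ : F) (hζ : ζ ^ 4 = -1) :
    (XCurve F).toAffine.Equation
      (RatFunc.C (ζ ^ 2) * RatFunc.X ^ (2 * n + 3) * (RatFunc.X - 1))
      (RatFunc.C (ζ ^ 3) * RatFunc.X ^ (n + 3) * (RatFunc.X - 1) ^ (2 * n + 3)) ∧
    (XCurve F).toAffine.Equation
      (-(RatFunc.C (ζ ^ 2)) * RatFunc.X ^ (2 * n + 3) * (RatFunc.X - 1))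
      (-(RatFunc.C ζ) * RatFunc.X ^ (n + 3) * (RatFunc.X - 1) ^ (2 * n + 3)) := by
  have := Fact.mk hp
  have hc : RatFunc.C ζ ^ 4 = -1 := by rw [← map_pow, hζ, map_neg, map_one]
  have hT : (RatFunc.X - 1 : RatFunc F) ^ (4 * n + 3) = RatFunc.X ^ (4 * n + 3) - 1 := by
    rw [← hpn, sub_pow_char, one_pow]
  simp only [XCurve_equation_iff, map_pow]
  exact ⟨P_equation_of_frobenius hc hT, R_equation_of_frobenius hc hT⟩
end

section
/- Let p = 4n+3 be a prime and let F be a field of characteristic p. Let φ : F(t) → F(t) be the F-algebra homomorphism of the rational function field determined by t ↦ t^p. If x₀, y₀ ∈ F(t) satisfy y₀² = x₀³ + t(t−1)²·x₀, then the elements x₁ = φ(x₀) / (t^{2n}(t−1)^{4n+2}) and y₁ = φ(y₀) / (t^{3n}(t−1)^{6n+3}) satisfy y₁² = x₁³ + t³(t−1)²·x₁. In other words, the purely inseparable base change t ↦ t^p followed by minimization sends points of the elliptic curve Y: y² = x³ + t(t−1)²x over F(t) to points of the elliptic curve X: y² = x³ + t³(t−1)²x over F(t). -/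
open RatFunc

/-!
Applying `φ` to the equation of `Y` gives `φ y₀² = φ x₀³ + tᵖ(tᵖ − 1)²·φ x₀`, and in
characteristic `p` the coefficient is `tᵖ(t − 1)²ᵖ`. With `p = 4n + 3` this is `u⁴·t³(t − 1)²`
for `u = tⁿ(t − 1)²ⁿ⁺¹`, and the change of variables `(x, y) ↦ (x/u², y/u³)` divides the
coefficient of `x` in `y² = x³ + a·x` by `u⁴`.
-/

theorem short_weierstrass_div_pow {K : Type*} [Field K] {a x y u : K} (hu : u ≠ 0)
    (h : y ^ 2 = x ^ 3 + a * x) :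
    (y / u ^ 3) ^ 2 = (x / u ^ 2) ^ 3 + a / u ^ 4 * (x / u ^ 2) := by
  field_simp
  linear_combination h

theorem RatFunc.X_sub_one_ne_zero (F : Type*) [Field F] : (X - 1 : RatFunc F) ≠ 0 := by
  simpa using RatFunc.algebraMap_ne_zero (K := F) (Polynomial.X_sub_C_ne_zero 1)

theorem RatFunc.map_X_mul_X_sub_one_sq {F : Type*} [Field F] (p : ℕ) [Fact p.Prime] [CharP F p]
    (φ : RatFunc F →ₐ[F] RatFunc F) (hφ : φ X = X ^ p) :
    φ (X * (X - 1) ^ 2) = X ^ p * (X - 1) ^ (2 * p) := by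
  have : CharP (RatFunc F) p :=
    charP_of_injective_algebraMap (algebraMap F (RatFunc F)).injective p
  rw [map_mul, map_pow, map_sub, map_one, hφ, pow_mul', sub_pow_char (p := p), one_pow]

/-- Let `p = 4n+3` be a prime, `F` a field of characteristic `p`, and `φ : F(t) → F(t)` the
`F`-algebra homomorphism of the rational function field determined by `t ↦ t^p`.  If
`(x₀, y₀)` satisfies `y₀² = x₀³ + t(t−1)²·x₀`, then
`x₁ = φ(x₀)/(t^{2n}(t−1)^{4n+2})` and `y₁ = φ(y₀)/(t^{3n}(t−1)^{6n+3})` satisfy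
`y₁² = x₁³ + t³(t−1)²·x₁`.  That is, the purely inseparable base change `t ↦ t^p` followed
by minimization sends points of `Y : y² = x³ + t(t−1)²x` to points of
`X : y² = x³ + t³(t−1)²x`. -/
theorem base_change_Y_to_X (p n : ℕ) (hp : p.Prime) (hpn : p = 4 * n + 3)
    (F : Type*) [Field F] [CharP F p]
    (φ : RatFunc F →ₐ[F] RatFunc F) (hφ : φ RatFunc.X = RatFunc.X ^ p)
    (x₀ y₀ : RatFunc F)
    (h : y₀ ^ 2 = x₀ ^ 3 + RatFunc.X * (RatFunc.X - 1) ^ 2 * x₀) :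
    (φ y₀ / (RatFunc.X ^ (3 * n) * (RatFunc.X - 1) ^ (6 * n + 3))) ^ 2 =
      (φ x₀ / (RatFunc.X ^ (2 * n) * (RatFunc.X - 1) ^ (4 * n + 2))) ^ 3 +
      RatFunc.X ^ 3 * (RatFunc.X - 1) ^ 2 *
        (φ x₀ / (RatFunc.X ^ (2 * n) * (RatFunc.X - 1) ^ (4 * n + 2))) := by
  have : Fact p.Prime := ⟨hp⟩
  set u : RatFunc F := X ^ n * (X - 1) ^ (2 * n + 1)
  have hu : u ≠ 0 := mul_ne_zero (pow_ne_zero _ X_ne_zero) (pow_ne_zero _ (X_sub_one_ne_zero F))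
  have hu₂ : X ^ (2 * n) * (X - 1) ^ (4 * n + 2) = u ^ 2 := by ring
  have hu₃ : X ^ (3 * n) * (X - 1) ^ (6 * n + 3) = u ^ 3 := by ring
  have hcoeff : φ (X * (X - 1) ^ 2) / u ^ 4 = X ^ 3 * (X - 1) ^ 2 := by
    rw [map_X_mul_X_sub_one_sq p φ hφ, hpn, div_eq_iff (pow_ne_zero 4 hu)]
    ring
  have hφh : φ y₀ ^ 2 = φ x₀ ^ 3 + φ (X * (X - 1) ^ 2) * φ x₀ := by
    simpa only [map_pow, map_add, map_mul] using congrArg φ h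
  rw [hu₂, hu₃, ← hcoeff]
  exact short_weierstrass_div_pow hu hφh
end

section
/- Let p = 4n+3 be a prime, let F be an algebraic closure of the field with p elements, and let ζ ∈ F satisfy ζ⁴ = −1. Then the point P = (ζ²·t^{2n+3}(t−1), ζ³·t^{n+3}(t−1)^{2n+3}) of the elliptic curve X: y² = x³ + t³(t−1)²·x over F(t) has infinite order in the group of points of X; i.e., P is a section of infinite order of the elliptic fibration. -/
/-!
On `y² = x³ + A x` doubling sends `x = a / b` (in lowest terms) to
`(a² - A b²)² / (4 a b (a² + A b²))`. If `deg A` is odd, no cancellation of leading terms can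
occur, so the numerator has degree at least `4 h(x)`, `h(x) = max (deg a) (deg b)`; and every common
factor of numerator and denominator divides `A⁴`. Hence `h(2P) ≥ 4 h(P) - 4 deg A`, so once
`3 h(P) > 4 deg A` the heights of `2ᵏ P` grow without bound and `P` is not torsion.

For the given point, Frobenius `(t ± 1)ᵖ = tᵖ ± 1` makes `x(P)² ∓ t³(t-1)²` factor completely and
`x(2P) = (t+1)^{2p} / (-4ζ² t^{2n} (t-1)^{4n+2})`. Its numerator is prime to `t³(t-1)²`, so the
next doubling has no cancellation: `h(4P) ≥ 4 · 2p > 20 / 3`.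
-/

open RatFunc WeierstrassCurve.Affine

open scoped Polynomial

namespace Polynomial

variable {R : Type*} [CommRing R] [NoZeroDivisors R] {A : R[X]}

theorem natDegree_sq_add_mul_sq (hA : Odd A.natDegree) (a : R[X]) {b : R[X]} (hb : b ≠ 0) :
    (a ^ 2 + A * b ^ 2).natDegree = max (2 * a.natDegree) (A.natDegree + 2 * b.natDegree) := by
  have hA0 : A ≠ 0 := by rintro rfl; simp at hA
  have hdeg : (A * b ^ 2).natDegree = A.natDegree + 2 * b.natDegree := by
    rw [natDegree_mul hA0 (pow_ne_zero _ hb), natDegree_pow, mul_comm 2]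
  obtain ⟨k, hk⟩ := hA
  rcases lt_or_gt_of_ne (show (a ^ 2).natDegree ≠ (A * b ^ 2).natDegree by
    rw [natDegree_pow, hdeg]; omega) with h | h
  · rw [natDegree_add_eq_right_of_natDegree_lt h, hdeg]
    rw [natDegree_pow, hdeg] at h
    omega
  · rw [natDegree_add_eq_left_of_natDegree_lt h, natDegree_pow]
    rw [natDegree_pow, hdeg] at h
    omega

theorem sq_add_mul_sq_ne_zero (hA : Odd A.natDegree) (a : R[X]) {b : R[X]} (hb : b ≠ 0) :
    a ^ 2 + A * b ^ 2 ≠ 0 := by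
  refine ne_zero_of_natDegree_gt (n := 0) ?_
  rw [natDegree_sq_add_mul_sq hA a hb]
  obtain ⟨k, hk⟩ := hA
  omega

variable {F : Type*} [Field F]

theorem isCoprime_X_add_one_X_pow_mul_X_sub_one_pow (h2 : (2 : F) ≠ 0) (i j : ℕ) :
    IsCoprime (X + 1 : F[X]) (X ^ i * (X - 1) ^ j) := by
  have hX : IsCoprime (X + 1 : F[X]) X := ⟨1, -1, by ring⟩
  have hX1 : IsCoprime (X + 1 : F[X]) (X - 1) := by
    have h2 : IsUnit (-1 - 1 : F) := by
      rw [show (-1 - 1 : F) = -2 by ring]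
      exact (neg_ne_zero.mpr h2).isUnit
    simpa using isCoprime_X_sub_C_of_isUnit_sub h2
  exact hX.pow_right.mul_right hX1.pow_right

theorem C_mul_X_pow_mul_X_sub_one_pow_ne_zero {c : F} (hc : c ≠ 0) (i j : ℕ) :
    C c * (X ^ i * (X - 1) ^ j) ≠ 0 :=
  mul_ne_zero (C_ne_zero.mpr hc) <| mul_ne_zero (pow_ne_zero _ X_ne_zero) <|
    pow_ne_zero _ (by simpa using X_sub_C_ne_zero (1 : F))

end Polynomial

section Divisibility

variable {R : Type*} [CommRing R] [GCDMonoid R]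

theorem dvd_pow_four_of_dvd_sq_sub_of_dvd_mul {A a b g : R} (h2 : IsUnit (2 : R))
    (hab : IsCoprime a b) (hc : g ∣ (a ^ 2 - A * b ^ 2) ^ 2)
    (hs : g ∣ a * (b * (a ^ 2 + A * b ^ 2))) :
    g ∣ A ^ 4 := by
  set c := a ^ 2 - A * b ^ 2
  set s := a ^ 2 + A * b ^ 2
  have hsb : IsCoprime s b := by
    rw [show s = a ^ 2 + b * (A * b) by ring]
    exact hab.pow_left.add_mul_left_left _
  have hcb : IsCoprime (c ^ 2) b := by
    rw [show c = a ^ 2 + b * (-(A * b)) by ring]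
    exact (hab.pow_left.add_mul_left_left _).pow_left
  have hca : gcd (c ^ 2) a ∣ A ^ 2 := by
    have hcop : IsCoprime (gcd (c ^ 2) a) (b ^ 4) :=
      (hab.of_isCoprime_of_dvd_left (gcd_dvd_right _ _)).pow_right
    refine hcop.dvd_of_dvd_mul_right ?_
    have : A ^ 2 * b ^ 4 = c ^ 2 - a * (a ^ 3 - 2 * A * a * b ^ 2) := by ring
    rw [this]
    exact dvd_sub (gcd_dvd_left _ _) ((gcd_dvd_right _ _).mul_right _)
  have hcs : gcd (c ^ 2) s ∣ A ^ 2 := by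
    have hcop : IsCoprime (gcd (c ^ 2) s) (b ^ 4) :=
      (hsb.of_isCoprime_of_dvd_left (gcd_dvd_right _ _)).pow_right
    rw [← h2.dvd_mul_left, ← h2.dvd_mul_left]
    refine hcop.dvd_of_dvd_mul_right ?_
    have : 2 * (2 * A ^ 2) * b ^ 4 = c ^ 2 - s * (s - 4 * A * b ^ 2) := by ring
    rw [this]
    exact dvd_sub (gcd_dvd_left _ _) ((gcd_dvd_right _ _).mul_right _)
  have hcbs : gcd (c ^ 2) (b * s) ∣ A ^ 2 :=
    (gcd_mul_dvd_mul_gcd _ _ _).trans <|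
      ((hcb.isUnit_of_dvd' (gcd_dvd_left _ _) (gcd_dvd_right _ _)).mul_left_dvd).mpr hcs
  calc g ∣ gcd (c ^ 2) (a * (b * s)) := dvd_gcd hc hs
    _ ∣ gcd (c ^ 2) a * gcd (c ^ 2) (b * s) := gcd_mul_dvd_mul_gcd _ _ _
    _ ∣ A ^ 2 * A ^ 2 := mul_dvd_mul hca hcbs
    _ = A ^ 4 := by ring

end Divisibility

namespace RatFunc

variable {K : Type*} [Field K]

theorem exists_eq_num_mul_and_eq_denom_mul {p q : K[X]} (hp : p ≠ 0) (hq : q ≠ 0) :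
    ∃ g : K[X], p = num (algebraMap _ _ p / algebraMap _ _ q) * g ∧
      q = denom (algebraMap _ _ p / algebraMap _ _ q) * g := by
  set x : RatFunc K := algebraMap _ _ p / algebraMap _ _ q
  have hx : x ≠ 0 := div_ne_zero (algebraMap_ne_zero hp) (algebraMap_ne_zero hq)
  obtain ⟨g, hg⟩ : x.num ∣ p := num_div_dvd p hq
  refine ⟨g, hg, mul_left_cancel₀ (num_ne_zero hx) ?_⟩
  linear_combination (num_mul_eq_mul_denom_iff (x := x) hq).mpr rfl + x.denom * hg

theorem natDegree_num_div_of_isCoprime {p q : K[X]} (hp : p ≠ 0) (hq : q ≠ 0)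
    (h : IsCoprime p q) :
    (num (algebraMap K[X] (RatFunc K) p / algebraMap _ _ q)).natDegree = p.natDegree := by
  obtain ⟨g, hgp, hgq⟩ := exists_eq_num_mul_and_eq_denom_mul hp hq
  have hg : IsUnit g := h.isUnit_of_dvd' (Dvd.intro_left _ hgp.symm) (Dvd.intro_left _ hgq.symm)
  obtain ⟨c, hc, rfl⟩ := Polynomial.isUnit_iff.mp hg
  exact ((congrArg Polynomial.natDegree hgp).trans (Polynomial.natDegree_mul_C hc.ne_zero)).symm

theorem X_sub_one_ne_zero_s10 : (X - 1 : RatFunc K) ≠ 0 := by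
  rw [← algebraMap_X, ← map_one (algebraMap K[X] (RatFunc K)), ← map_sub]
  exact algebraMap_ne_zero (Polynomial.X_sub_C_ne_zero 1)

theorem X_add_one_pow_char (p : ℕ) [Fact p.Prime] [CharP K p] :
    (X + 1 : RatFunc K) ^ p = X ^ p + 1 := by
  have := charP_of_injective_algebraMap' K (A := RatFunc K) p
  rw [add_pow_char, one_pow]

theorem X_sub_one_pow_char (p : ℕ) [Fact p.Prime] [CharP K p] :
    (X - 1 : RatFunc K) ^ p = X ^ p - 1 := by
  have := charP_of_injective_algebraMap' K (A := RatFunc K) p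
  rw [sub_pow_char, one_pow]

noncomputable def naiveHeight (x : RatFunc K) : ℕ := max x.num.natDegree x.denom.natDegree

theorem ne_zero_of_naiveHeight_pos {x : RatFunc K} (hx : 0 < naiveHeight x) : x ≠ 0 := by
  rintro rfl
  simp [naiveHeight] at hx

end RatFunc

theorem two_ne_zero_of_charP_four_mul_add_three {F : Type*} [Field F] (n : ℕ)
    [CharP F (4 * n + 3)] : (2 : F) ≠ 0 :=
  Ring.two_ne_zero (by rw [ringChar.eq F (4 * n + 3)]; omega)

theorem ne_zero_of_pow_four_eq_neg_one {F : Type*} [Field F] {ζ : F} (hζ : ζ ^ 4 = -1) :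
    ζ ≠ 0 := by
  rintro rfl
  norm_num at hζ

section Doubling

variable {K : Type*} [Field K]

noncomputable def doubleX (a x : K) : K := (x ^ 2 - a) ^ 2 / (4 * x * (x ^ 2 + a))

namespace WeierstrassCurve.Affine

variable (W : WeierstrassCurve K)

theorem equation_iff_of_isShortNF [W.IsShortNF] (ha₆ : W.a₆ = 0) (x y : K) :
    W.toAffine.Equation x y ↔ y ^ 2 = x ^ 3 + W.a₄ * x := by
  rw [equation_iff]
  simp [ha₆]

variable {W}

theorem nonsingular_of_Y_ne_zero [W.IsCharNeTwoNF] (h2 : (2 : K) ≠ 0) {x y : K}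
    (h : W.toAffine.Equation x y) (hy : y ≠ 0) : W.toAffine.Nonsingular x y := by
  rw [nonsingular_iff']
  refine ⟨h, Or.inr ?_⟩
  simpa [W.a₁_of_isCharNeTwoNF, W.a₃_of_isCharNeTwoNF] using mul_ne_zero h2 hy

theorem exists_two_nsmul_some_eq_doubleX [DecidableEq K] [W.IsShortNF] (ha₆ : W.a₆ = 0)
    (h2 : (2 : K) ≠ 0) {x y : K} (h : W.toAffine.Nonsingular x y) (hy : y ≠ 0) :
    ∃ (x' y' : K) (h' : W.toAffine.Nonsingular x' y'),
      2 • Point.some _ _ h = Point.some _ _ h' ∧ x' = doubleX W.a₄ x := by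
  have heq := (equation_iff_of_isShortNF W ha₆ x y).mp h.1
  have hy' : y ≠ W.toAffine.negY x y := by
    simp only [negY, W.a₁_of_isCharNeTwoNF, W.a₃_of_isCharNeTwoNF]
    intro h0
    exact mul_ne_zero h2 hy (by linear_combination h0)
  refine ⟨_, _, _, (two_nsmul _).trans (Point.add_self_of_Y_ne hy'), ?_⟩
  have hx : x * (x ^ 2 + W.a₄) ≠ 0 := by
    intro h0
    exact pow_ne_zero 2 hy (by linear_combination heq + h0)
  rw [slope_of_Y_ne rfl hy', doubleX]
  simp only [addX, negY, W.a₁_of_isCharNeTwoNF, W.a₂_of_isShortNF, W.a₃_of_isCharNeTwoNF,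
    zero_mul, mul_zero, add_zero, sub_zero, sub_neg_eq_add]
  have h4 : (4 : K) ≠ 0 := by rw [show (4 : K) = 2 * 2 by norm_num]; exact mul_ne_zero h2 h2
  rw [div_pow, show (y + y) ^ 2 = 4 * x * (x ^ 2 + W.a₄) by linear_combination 4 * heq,
    eq_div_iff (by rw [mul_assoc]; exact mul_ne_zero h4 hx), sub_sub, ← two_mul, sub_mul,
    div_mul_cancel₀ _ (by rw [mul_assoc]; exact mul_ne_zero h4 hx)]
  ring

end WeierstrassCurve.Affine

end Doubling

section Height

variable {F : Type*} [Field F] {A : F[X]}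

theorem sq_add_algebraMap_ne_zero (hA : Odd A.natDegree) (x : RatFunc F) :
    x ^ 2 + algebraMap F[X] (RatFunc F) A ≠ 0 := by
  set a := x.num
  set b := x.denom
  have hb : algebraMap F[X] (RatFunc F) b ≠ 0 := algebraMap_ne_zero (denom_ne_zero x)
  have hx : x = algebraMap _ _ a / algebraMap _ _ b := (num_div_denom x).symm
  rw [hx, show (algebraMap _ _ a / algebraMap _ _ b) ^ 2 + algebraMap F[X] (RatFunc F) A =
      algebraMap _ _ (a ^ 2 + A * b ^ 2) / algebraMap _ _ b ^ 2 by
    rw [map_add, map_mul, map_pow, map_pow]; field_simp]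
  exact div_ne_zero (algebraMap_ne_zero (Polynomial.sq_add_mul_sq_ne_zero hA a (denom_ne_zero x)))
    (pow_ne_zero _ hb)

theorem doubleX_algebraMap_eq_div (x : RatFunc F) :
    doubleX (algebraMap F[X] (RatFunc F) A) x =
      algebraMap _ _ ((x.num ^ 2 - A * x.denom ^ 2) ^ 2) /
        algebraMap _ _ (4 * (x.num * (x.denom * (x.num ^ 2 + A * x.denom ^ 2)))) := by
  set a := x.num
  set b := x.denom
  have hb : algebraMap F[X] (RatFunc F) b ≠ 0 := algebraMap_ne_zero (denom_ne_zero x)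
  have hx : x = algebraMap _ _ a / algebraMap _ _ b := (num_div_denom x).symm
  have hnum : (x ^ 2 - algebraMap _ _ A) ^ 2 =
      algebraMap F[X] (RatFunc F) ((a ^ 2 - A * b ^ 2) ^ 2) / algebraMap _ _ b ^ 4 := by
    rw [hx, map_pow, map_sub, map_mul, map_pow, map_pow]; field_simp
  have hden : 4 * x * (x ^ 2 + algebraMap _ _ A) =
      algebraMap F[X] (RatFunc F) (4 * (a * (b * (a ^ 2 + A * b ^ 2)))) / algebraMap _ _ b ^ 4 := by
    rw [hx, map_mul, map_mul, map_mul, map_add, map_mul, map_pow, map_pow, map_ofNat]; field_simp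
  rw [doubleX, hnum, hden, div_div_div_cancel_right₀ (pow_ne_zero _ hb)]

theorem four_mul_naiveHeight_le (hA : Odd A.natDegree) (x : RatFunc F) :
    4 * naiveHeight x ≤ ((x.num ^ 2 - A * x.denom ^ 2) ^ 2).natDegree := by
  have hA' : Odd (-A).natDegree := by rwa [Polynomial.natDegree_neg]
  have hdeg := Polynomial.natDegree_sq_add_mul_sq hA' x.num (denom_ne_zero x)
  rw [Polynomial.natDegree_neg] at hdeg
  rw [Polynomial.natDegree_pow, sub_eq_add_neg, ← neg_mul, hdeg, naiveHeight]
  omega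

theorem exists_dvd_pow_four_and_four_mul_naiveHeight_le (h2 : (2 : F) ≠ 0)
    (hA : Odd A.natDegree) {x : RatFunc F} (hx : x ≠ 0) :
    ∃ g : F[X], g ∣ A ^ 4 ∧ g ∣ (x.num ^ 2 - A * x.denom ^ 2) ^ 2 ∧
      4 * naiveHeight x ≤
        naiveHeight (doubleX (algebraMap F[X] (RatFunc F) A) x) + g.natDegree := by
  classical
  set a := x.num
  set b := x.denom
  have h2' : IsUnit (2 : F[X]) := by
    rw [← map_ofNat Polynomial.C 2]
    exact Polynomial.isUnit_C.mpr h2.isUnit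
  have hc : a ^ 2 - A * b ^ 2 ≠ 0 := by
    simpa [sub_eq_add_neg] using
      Polynomial.sq_add_mul_sq_ne_zero (A := -A) (by rwa [Polynomial.natDegree_neg]) a
        (denom_ne_zero x)
  have hd : 4 * (a * (b * (a ^ 2 + A * b ^ 2))) ≠ 0 := by
    refine mul_ne_zero ?_ <| mul_ne_zero (num_ne_zero hx) <|
      mul_ne_zero (denom_ne_zero x) (Polynomial.sq_add_mul_sq_ne_zero hA _ (denom_ne_zero x))
    rw [show (4 : F[X]) = 2 * 2 by norm_num]
    exact (h2'.mul h2').ne_zero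
  obtain ⟨g, hgc, hgd⟩ := exists_eq_num_mul_and_eq_denom_mul (pow_ne_zero 2 hc) hd
  rw [← doubleX_algebraMap_eq_div] at hgc hgd
  set y := doubleX (algebraMap F[X] (RatFunc F) A) x
  have hgs : g ∣ a * (b * (a ^ 2 + A * b ^ 2)) := by
    rw [← h2'.dvd_mul_left, ← h2'.dvd_mul_left, ← mul_assoc,
      show (2 : F[X]) * 2 = 4 by norm_num]
    exact Dvd.intro_left _ hgd.symm
  refine ⟨g, dvd_pow_four_of_dvd_sq_sub_of_dvd_mul h2' x.isCoprime_num_denom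
    (Dvd.intro_left _ hgc.symm) hgs, Dvd.intro_left _ hgc.symm, ?_⟩
  have hx4 := four_mul_naiveHeight_le hA x
  have hmul : (y.num * g).natDegree ≤ y.num.natDegree + g.natDegree := Polynomial.natDegree_mul_le
  have hnum : y.num.natDegree ≤ naiveHeight y := le_max_left _ _
  rw [hgc] at hx4
  omega

theorem four_mul_naiveHeight_le_naiveHeight_doubleX_add (h2 : (2 : F) ≠ 0)
    (hA : Odd A.natDegree) {x : RatFunc F} (hx : x ≠ 0) :
    4 * naiveHeight x ≤
      naiveHeight (doubleX (algebraMap F[X] (RatFunc F) A) x) + 4 * A.natDegree := by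
  obtain ⟨g, hgA, -, hg⟩ := exists_dvd_pow_four_and_four_mul_naiveHeight_le h2 hA hx
  have hA0 : A ≠ 0 := by rintro rfl; simp at hA
  have hgdeg : g.natDegree ≤ 4 * A.natDegree := by
    simpa using Polynomial.natDegree_le_of_dvd hgA (pow_ne_zero 4 hA0)
  omega

theorem four_mul_naiveHeight_le_naiveHeight_doubleX (h2 : (2 : F) ≠ 0)
    (hA : Odd A.natDegree) {x : RatFunc F} (hx : x ≠ 0) (hxA : IsCoprime x.num A) :
    4 * naiveHeight x ≤ naiveHeight (doubleX (algebraMap F[X] (RatFunc F) A) x) := by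
  obtain ⟨g, hgA, hgc, hg⟩ := exists_dvd_pow_four_and_four_mul_naiveHeight_le h2 hA hx
  have hcA : IsCoprime ((x.num ^ 2 - A * x.denom ^ 2) ^ 2) (A ^ 4) := by
    rw [show x.num ^ 2 - A * x.denom ^ 2 = x.num ^ 2 + A * -x.denom ^ 2 by ring]
    exact (hxA.pow_left.add_mul_left_left _).pow_left.pow_right
  have hgdeg := Polynomial.natDegree_eq_zero_of_isUnit (hcA.isUnit_of_dvd' hgc hgA)
  omega

end Height

theorem not_isOfFinAddOrder_of_forall_exists_lt {G : Type*} [AddMonoid G] {Q : G} (f : G → ℕ)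
    (hf : ∀ N, ∃ n : ℕ, N < f (n • Q)) : ¬IsOfFinAddOrder Q := by
  intro hQ
  obtain ⟨N, hN⟩ := (hQ.finite_multiples.image f).bddAbove
  obtain ⟨n, hn⟩ := hf N
  exact (hN ⟨n • Q, ⟨n, rfl⟩, rfl⟩).not_gt hn

namespace WeierstrassCurve.Affine

variable {F : Type*} [Field F]

noncomputable def Point.xNaiveHeight {W : WeierstrassCurve.Affine (RatFunc F)} : W.Point → ℕ
  | zero => 0
  | some x _ _ => naiveHeight x

variable [DecidableEq (RatFunc F)] {A : F[X]} {W : WeierstrassCurve (RatFunc F)} [W.IsShortNF]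

theorem exists_two_nsmul_some_eq_doubleX_of_X_ne_zero
    (ha₄ : W.a₄ = algebraMap F[X] (RatFunc F) A) (ha₆ : W.a₆ = 0) (hA : Odd A.natDegree)
    (h2 : (2 : F) ≠ 0) {x y : RatFunc F} (h : W.toAffine.Nonsingular x y) (hx : x ≠ 0) :
    ∃ (x' y' : RatFunc F) (h' : W.toAffine.Nonsingular x' y'),
      2 • Point.some _ _ h = Point.some _ _ h' ∧
        x' = doubleX (algebraMap F[X] (RatFunc F) A) x := by
  have h2' : (2 : RatFunc F) ≠ 0 := by
    rw [← map_ofNat (algebraMap F (RatFunc F)) 2]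
    exact (map_ne_zero _).mpr h2
  have hy : y ≠ 0 := by
    rintro rfl
    have h0 := (equation_iff_of_isShortNF W ha₆ x 0).mp h.1
    rw [ha₄] at h0
    exact mul_ne_zero hx (sq_add_algebraMap_ne_zero hA x) (by linear_combination -h0)
  rw [← ha₄]
  exact exists_two_nsmul_some_eq_doubleX ha₆ h2' h hy

theorem exists_two_pow_nsmul_some_eq (ha₄ : W.a₄ = algebraMap F[X] (RatFunc F) A)
    (ha₆ : W.a₆ = 0) (hA : Odd A.natDegree) (h2 : (2 : F) ≠ 0) {x y : RatFunc F}
    (h : W.toAffine.Nonsingular x y) (hx : 4 * A.natDegree < 3 * naiveHeight x) (k : ℕ) :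
    ∃ (x' y' : RatFunc F) (h' : W.toAffine.Nonsingular x' y'),
      2 ^ k • Point.some _ _ h = Point.some _ _ h' ∧ naiveHeight x + k ≤ naiveHeight x' := by
  induction k with
  | zero => exact ⟨x, y, h, by rw [pow_zero, one_nsmul], le_refl _⟩
  | succ k ih =>
    obtain ⟨x', y', h', hk, hx'⟩ := ih
    have hx'0 : x' ≠ 0 := ne_zero_of_naiveHeight_pos (by omega)
    obtain ⟨_, y'', h'', hdbl, rfl⟩ :=
      exists_two_nsmul_some_eq_doubleX_of_X_ne_zero ha₄ ha₆ hA h2 h' hx'0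
    refine ⟨_, y'', h'', by rw [pow_succ, mul_nsmul, hk, hdbl], ?_⟩
    have := four_mul_naiveHeight_le_naiveHeight_doubleX_add h2 hA hx'0
    omega

theorem not_isOfFinAddOrder_some_of_lt_naiveHeight (ha₄ : W.a₄ = algebraMap F[X] (RatFunc F) A)
    (ha₆ : W.a₆ = 0) (hA : Odd A.natDegree) (h2 : (2 : F) ≠ 0) {x y : RatFunc F}
    (h : W.toAffine.Nonsingular x y) (hx : 4 * A.natDegree < 3 * naiveHeight x) :
    ¬IsOfFinAddOrder (Point.some _ _ h) := by
  refine not_isOfFinAddOrder_of_forall_exists_lt Point.xNaiveHeight fun N => ?_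
  obtain ⟨x', y', h', hN, hx'⟩ := exists_two_pow_nsmul_some_eq ha₄ ha₆ hA h2 h hx N
  refine ⟨2 ^ N, ?_⟩
  rw [hN]
  show N < naiveHeight x'
  omega

end WeierstrassCurve.Affine

namespace XCurve

variable {F : Type*} [Field F]

instance : (XCurve F).IsShortNF := ⟨rfl, rfl, rfl⟩

noncomputable def a₄Poly (F : Type*) [Field F] : F[X] :=
  Polynomial.X ^ 3 * (Polynomial.X - 1) ^ 2

theorem a₄_eq : (XCurve F).a₄ = algebraMap F[X] (RatFunc F) (a₄Poly F) := by
  simp [XCurve, a₄Poly]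

theorem natDegree_a₄Poly : (a₄Poly F).natDegree = 5 := by
  rw [a₄Poly]
  compute_degree!

theorem odd_natDegree_a₄Poly : Odd (a₄Poly F).natDegree := by
  rw [natDegree_a₄Poly]
  decide

variable {n : ℕ} {ζ : F}

theorem neg_four_mul_sq_ne_zero (h2 : (2 : F) ≠ 0) (hζ : ζ ^ 4 = -1) : -(4 * ζ ^ 2) ≠ 0 := by
  rw [neg_ne_zero, show (4 : F) = 2 * 2 by norm_num]
  exact mul_ne_zero (mul_ne_zero h2 h2) (pow_ne_zero _ (ne_zero_of_pow_four_eq_neg_one hζ))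

theorem P_x_ne_zero (hζ : ζ ^ 4 = -1) :
    C (ζ ^ 2) * X ^ (2 * n + 3) * (X - 1 : RatFunc F) ≠ 0 := by
  simp [ne_zero_of_pow_four_eq_neg_one hζ, RatFunc.X_ne_zero, RatFunc.X_sub_one_ne_zero_s10]

variable [Fact (4 * n + 3).Prime] [CharP F (4 * n + 3)]

theorem nonsingular_P (hζ : ζ ^ 4 = -1) :
    (XCurve F).toAffine.Nonsingular (C (ζ ^ 2) * X ^ (2 * n + 3) * (X - 1))
      (C (ζ ^ 3) * X ^ (n + 3) * (X - 1) ^ (2 * n + 3)) := by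
  have hu : C ζ ^ 4 = (-1 : RatFunc F) := by rw [← map_pow, hζ, map_neg, map_one]
  refine nonsingular_of_Y_ne_zero ?_ ?_ ?_
  · rw [← map_ofNat (algebraMap F (RatFunc F)) 2]
    exact (map_ne_zero _).mpr (two_ne_zero_of_charP_four_mul_add_three n)
  · rw [equation_iff_of_isShortNF _ rfl]
    show _ = _ + X ^ 3 * (X - 1) ^ 2 * _
    simp only [map_pow]
    linear_combination (C ζ ^ 6 * X ^ (2 * n + 6) * (X - 1) ^ 3) *
        RatFunc.X_sub_one_pow_char (K := F) (4 * n + 3) +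
      (-(X - 1) ^ 3 * X ^ (2 * n + 6) * C ζ ^ 2) * hu
  · simp [ne_zero_of_pow_four_eq_neg_one hζ, RatFunc.X_ne_zero, RatFunc.X_sub_one_ne_zero_s10]

theorem doubleX_P (hζ : ζ ^ 4 = -1) :
    doubleX (algebraMap F[X] (RatFunc F) (a₄Poly F)) (C (ζ ^ 2) * X ^ (2 * n + 3) * (X - 1)) =
      algebraMap F[X] (RatFunc F) ((Polynomial.X + 1) ^ (2 * (4 * n + 3))) /
        algebraMap F[X] (RatFunc F) (Polynomial.C (-(4 * ζ ^ 2)) *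
          (Polynomial.X ^ (2 * n) * (Polynomial.X - 1) ^ (4 * n + 2))) := by
  have hu : C ζ ^ 4 = (-1 : RatFunc F) := by rw [← map_pow, hζ, map_neg, map_one]
  have hA : algebraMap F[X] (RatFunc F) (a₄Poly F) = X ^ 3 * (X - 1) ^ 2 := a₄_eq.symm
  have hsub : (C (ζ ^ 2) * X ^ (2 * n + 3) * (X - 1)) ^ 2 - X ^ 3 * (X - 1) ^ 2 =
      -(X ^ 3 * (X - 1) ^ 2 * (X + 1) ^ (4 * n + 3) : RatFunc F) := by
    rw [map_pow]
    linear_combination (X ^ (4 * n + 6) * (X - 1) ^ 2) * hu +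
      (X ^ 3 * (X - 1) ^ 2) * RatFunc.X_add_one_pow_char (K := F) (4 * n + 3)
  have hadd : (C (ζ ^ 2) * X ^ (2 * n + 3) * (X - 1)) ^ 2 + X ^ 3 * (X - 1) ^ 2 =
      -(X ^ 3 * (X - 1) ^ (4 * n + 5) : RatFunc F) := by
    rw [map_pow]
    linear_combination (X ^ (4 * n + 6) * (X - 1) ^ 2) * hu +
      (X ^ 3 * (X - 1) ^ 2) * RatFunc.X_sub_one_pow_char (K := F) (4 * n + 3)
  have h4 : (4 : RatFunc F) ≠ 0 := by
    have h2 := two_ne_zero_of_charP_four_mul_add_three (F := F) n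
    rw [← map_ofNat (algebraMap F (RatFunc F)) 4, show (4 : F) = 2 * 2 by norm_num]
    exact (map_ne_zero _).mpr (mul_ne_zero h2 h2)
  have hζ0 := ne_zero_of_pow_four_eq_neg_one hζ
  have hX := RatFunc.X_ne_zero (K := F)
  have hX1 := RatFunc.X_sub_one_ne_zero_s10 (K := F)
  rw [doubleX, hA, hsub, hadd]
  simp only [map_mul, map_pow, map_add, map_neg, map_sub, map_one, algebraMap_X, algebraMap_C,
    map_ofNat]
  rw [div_eq_div_iff (by simp [*]) (by simp [*])]
  ring

theorem isCoprime_num_doubleX_P (hζ : ζ ^ 4 = -1) :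
    IsCoprime (doubleX (algebraMap F[X] (RatFunc F) (a₄Poly F))
      (C (ζ ^ 2) * X ^ (2 * n + 3) * (X - 1))).num (a₄Poly F) := by
  have h2 := two_ne_zero_of_charP_four_mul_add_three (F := F) n
  rw [doubleX_P hζ]
  exact (Polynomial.isCoprime_X_add_one_X_pow_mul_X_sub_one_pow h2 3 2).pow_left
    |>.of_isCoprime_of_dvd_left <| num_div_dvd _ <|
      Polynomial.C_mul_X_pow_mul_X_sub_one_pow_ne_zero (neg_four_mul_sq_ne_zero h2 hζ) _ _

theorem naiveHeight_doubleX_P (hζ : ζ ^ 4 = -1) :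
    2 * (4 * n + 3) ≤ naiveHeight (doubleX (algebraMap F[X] (RatFunc F) (a₄Poly F))
      (C (ζ ^ 2) * X ^ (2 * n + 3) * (X - 1))) := by
  have h2 := two_ne_zero_of_charP_four_mul_add_three (F := F) n
  have hc := neg_four_mul_sq_ne_zero h2 hζ
  have hcop := (isCoprime_mul_unit_left_right (Polynomial.isUnit_C.mpr hc.isUnit) _ _).mpr
    (Polynomial.isCoprime_X_add_one_X_pow_mul_X_sub_one_pow h2 (2 * n) (4 * n + 2))
  rw [doubleX_P hζ]
  refine le_trans (le_of_eq ?_) (le_max_left _ _)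
  rw [natDegree_num_div_of_isCoprime
    (pow_ne_zero _ (by simpa using Polynomial.X_add_C_ne_zero (1 : F)))
    (Polynomial.C_mul_X_pow_mul_X_sub_one_pow_ne_zero hc _ _) hcop.pow_left]
  symm
  compute_degree!

end XCurve

open Classical in
theorem P_infinite_order_general (p n : ℕ) [hp : Fact p.Prime] (hpn : p = 4 * n + 3)
    (F : Type*) [Field F] [Algebra (ZMod p) F]
    (ζ : F) (hζ : ζ ^ 4 = -1) :
    ∃ h : (XCurve F).toAffine.Nonsingular
        (RatFunc.C (ζ ^ 2) * RatFunc.X ^ (2 * n + 3) * (RatFunc.X - 1))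
        (RatFunc.C (ζ ^ 3) * RatFunc.X ^ (n + 3) * (RatFunc.X - 1) ^ (2 * n + 3)),
      ¬ IsOfFinAddOrder (WeierstrassCurve.Affine.Point.some _ _ h) := by
  subst hpn
  have : CharP F (4 * n + 3) := charP_of_injective_algebraMap' (ZMod (4 * n + 3)) _
  have h2 := two_ne_zero_of_charP_four_mul_add_three (F := F) n
  have hA := XCurve.odd_natDegree_a₄Poly (F := F)
  refine ⟨XCurve.nonsingular_P hζ, fun hP => ?_⟩
  obtain ⟨_, _, h₁, hP₁, rfl⟩ := exists_two_nsmul_some_eq_doubleX_of_X_ne_zero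
    XCurve.a₄_eq rfl hA h2 (XCurve.nonsingular_P hζ) (XCurve.P_x_ne_zero hζ)
  have hx₁ := XCurve.naiveHeight_doubleX_P hζ
  obtain ⟨_, _, h₂, hP₂, rfl⟩ := exists_two_nsmul_some_eq_doubleX_of_X_ne_zero
    XCurve.a₄_eq rfl hA h2 h₁ (ne_zero_of_naiveHeight_pos (by omega))
  have hx₂ := four_mul_naiveHeight_le_naiveHeight_doubleX h2 hA
    (ne_zero_of_naiveHeight_pos (by omega)) (XCurve.isCoprime_num_doubleX_P hζ)
  refine not_isOfFinAddOrder_some_of_lt_naiveHeight XCurve.a₄_eq rfl hA h2 h₂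
    (by rw [XCurve.natDegree_a₄Poly]; omega) ?_
  rw [← hP₂, ← hP₁]
  exact hP.nsmul.nsmul

open Classical in
/-- Let `p = 4n+3` be a prime, `F` an algebraic closure of the field with `p` elements, and
`ζ ∈ F` with `ζ⁴ = −1`.  Then `P = (ζ²t^{2n+3}(t−1), ζ³t^{n+3}(t−1)^{2n+3})` is a point of
infinite order in the group of points of `X : y² = x³ + t³(t−1)²·x` over `F(t)`. -/
theorem P_infinite_order (p n : ℕ) [hp : Fact p.Prime] (hpn : p = 4 * n + 3)
    (F : Type*) [Field F] [Algebra (ZMod p) F] [IsAlgClosure (ZMod p) F]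
    (ζ : F) (hζ : ζ ^ 4 = -1) :
    ∃ h : (XCurve F).toAffine.Nonsingular
        (RatFunc.C (ζ ^ 2) * RatFunc.X ^ (2 * n + 3) * (RatFunc.X - 1))
        (RatFunc.C (ζ ^ 3) * RatFunc.X ^ (n + 3) * (RatFunc.X - 1) ^ (2 * n + 3)),
      ¬ IsOfFinAddOrder (WeierstrassCurve.Affine.Point.some _ _ h) :=
  P_infinite_order_general p n (hp := hp) hpn F ζ hζ
end

section
/- Let L be a free ℤ-module of finite rank equipped with a nondegenerate symmetric bilinear form whose extension to L ⊗ ℝ has signature (1, n), i.e., whose Gram matrix, viewed as a real symmetric matrix, has exactly one positive eigenvalue. If f : L → L is an isometry of this bilinear form, then the characteristic polynomial of f has at most one complex root of absolute value greater than 1, counted with algebraic multiplicity, and if such a root exists it is real. -/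
/-!
Complexify and consider the Hermitian form `H(v, w) = v̄ᵀ G w`, which `U` preserves. If `v` and
`w` are generalized eigenvectors of `U` for eigenvalues `a` and `b` with `ā b ≠ 1`, then
`H(v, w) = H(Uv, Uw)` forces `H(v, w) = 0` by induction on the nilpotency orders; in particular
the sum of the generalized eigenspaces of the eigenvalues of modulus `> 1` is totally isotropic.
Since `G` is nondegenerate with one positive eigenvalue, `H` is negative definite on a
hyperplane, so a totally isotropic subspace has dimension at most one. A non-real root `z` with
`|z| > 1` would come with the root `z̄`, giving two such roots.
-/

open Polynomial Matrix Module

namespace Matrix.IsHermitian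

variable {n 𝕜 : Type*} [Fintype n] [DecidableEq n] [RCLike 𝕜]

lemma eigenvalues_map_ofReal {A : Matrix n n ℝ} (hA : A.IsHermitian)
    (hA' : (A.map ((↑) : ℝ → 𝕜)).IsHermitian) : hA'.eigenvalues = hA.eigenvalues := by
  suffices hA'.eigenvalues₀ = hA.eigenvalues₀ by unfold eigenvalues; rw [this]
  have hmap : (A.map ((↑) : ℝ → 𝕜)).charpoly = A.charpoly.map (algebraMap ℝ 𝕜) :=
    charpoly_map A (algebraMap ℝ 𝕜)
  rw [← List.ofFn_inj, ← sort_roots_charpoly_eq_eigenvalues₀,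
    ← sort_roots_charpoly_eq_eigenvalues₀, hmap, hA.splits_charpoly.roots_map, Multiset.map_map]
  congr 2
  ext x
  simp

variable {A : Matrix n n 𝕜}

lemma star_dotProduct_mulVec_eq_sum_eigenvalues (hA : A.IsHermitian) (x : n → 𝕜) :
    star x ⬝ᵥ (A *ᵥ x) =
      ↑(∑ i, hA.eigenvalues i * ‖(star (hA.eigenvectorUnitary : Matrix n n 𝕜) *ᵥ x) i‖ ^ 2) := by
  set U : Matrix n n 𝕜 := (hA.eigenvectorUnitary : Matrix n n 𝕜)
  conv_lhs => rw [hA.spectral_theorem, Unitary.conjStarAlgAut_apply]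
  have hstar : star x ᵥ* U = star (star U *ᵥ x) := by
    rw [star_mulVec, star_eq_conjTranspose, conjTranspose_conjTranspose]
  rw [← mulVec_mulVec, ← mulVec_mulVec, dotProduct_mulVec, hstar]
  simp only [dotProduct, mulVec_diagonal, Pi.star_apply, RCLike.star_def, Function.comp_apply]
  push_cast
  refine Finset.sum_congr rfl fun i _ => ?_
  rw [← RCLike.mul_conj]
  ring

lemma eigenvalues_ne_zero_of_det_ne_zero (hA : A.IsHermitian) (hdet : A.det ≠ 0) (i : n) :
    hA.eigenvalues i ≠ 0 := fun h =>
  hdet <| hA.det_eq_prod_eigenvalues.trans <| Finset.prod_eq_zero (Finset.mem_univ i) (by simp [h])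

lemma eq_zero_of_isotropic_of_forall_pos_eigenvalues (hA : A.IsHermitian) (hdet : A.det ≠ 0)
    {x : n → 𝕜} (hx : star x ⬝ᵥ (A *ᵥ x) = 0)
    (hpos : ∀ i, 0 < hA.eigenvalues i → (star (hA.eigenvectorUnitary : Matrix n n 𝕜) *ᵥ x) i = 0) :
    x = 0 := by
  set U : Matrix n n 𝕜 := (hA.eigenvectorUnitary : Matrix n n 𝕜)
  have hnonpos : ∀ i ∈ Finset.univ, hA.eigenvalues i * ‖(star U *ᵥ x) i‖ ^ 2 ≤ 0 := by
    intro i _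
    rcases le_or_gt (hA.eigenvalues i) 0 with hneg | hpos'
    · exact mul_nonpos_of_nonpos_of_nonneg hneg (by positivity)
    · rw [hpos i hpos']; simp
  have hterm := (Finset.sum_eq_zero_iff_of_nonpos hnonpos).mp <| RCLike.ofReal_eq_zero.mp <|
    (hA.star_dotProduct_mulVec_eq_sum_eigenvalues x).symm.trans hx
  have hy : star U *ᵥ x = 0 := funext fun i => by
    rcases (hA.eigenvalues_ne_zero_of_det_ne_zero hdet i).lt_or_gt with hneg | hpos'
    · simpa [hneg.ne] using hterm i (Finset.mem_univ i)
    · exact hpos i hpos'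
  have hUU : U * star U = 1 := Unitary.mul_star_self_of_mem hA.eigenvectorUnitary.2
  calc x = (U * star U) *ᵥ x := by rw [hUU, one_mulVec]
    _ = 0 := by rw [← mulVec_mulVec, hy, mulVec_zero]

lemma finrank_le_card_pos_eigenvalues_of_isotropic (hA : A.IsHermitian) (hdet : A.det ≠ 0)
    {W : Submodule 𝕜 (n → 𝕜)} (hW : ∀ x ∈ W, star x ⬝ᵥ (A *ᵥ x) = 0) :
    finrank 𝕜 W ≤ Fintype.card {i // 0 < hA.eigenvalues i} := by
  let ℓ : (n → 𝕜) →ₗ[𝕜] ({i // 0 < hA.eigenvalues i} → 𝕜) :=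
    LinearMap.funLeft 𝕜 𝕜 Subtype.val ∘ₗ (star (hA.eigenvectorUnitary : Matrix n n 𝕜)).mulVecLin
  have hinj : Function.Injective (ℓ.domRestrict W) :=
    (injective_iff_map_eq_zero _).mpr fun ⟨x, hxW⟩ hx => Subtype.ext <|
      hA.eq_zero_of_isotropic_of_forall_pos_eigenvalues hdet (hW x hxW) fun i hi =>
        congrFun hx ⟨i, hi⟩
  simpa using LinearMap.finrank_le_finrank_of_injective hinj

end Matrix.IsHermitian

namespace LinearMap

variable {K V : Type*} [Field K] [StarRing K] [AddCommGroup V] [Module K V]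
  {B : V →ₗ⋆[K] V →ₗ[K] K} {f : Module.End K V} {a b : K}

theorem apply_eq_zero_of_pow_sub_smul_apply_eq_zero (hf : ∀ v w, B (f v) (f w) = B v w)
    (hab : star a * b ≠ 1) :
    ∀ (k l : ℕ) {v w : V}, ((f - a • 1) ^ k) v = 0 → ((f - b • 1) ^ l) w = 0 → B v w = 0
  | 0, _, v, w, hv, _ => by simp_all
  | _ + 1, 0, v, w, _, hw => by simp_all
  | k + 1, l + 1, v, w, hv, hw => by
    set v' := (f - a • 1) v
    set w' := (f - b • 1) w
    have hv' : ((f - a • 1) ^ k) v' = 0 := by rwa [← Module.End.mul_apply, ← pow_succ]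
    have hw' : ((f - b • 1) ^ l) w' = 0 := by rwa [← Module.End.mul_apply, ← pow_succ]
    have h₁ : B v' w' = 0 := apply_eq_zero_of_pow_sub_smul_apply_eq_zero hf hab k l hv' hw'
    have h₂ : B v' w = 0 := apply_eq_zero_of_pow_sub_smul_apply_eq_zero hf hab k (l + 1) hv' hw
    have h₃ : B v w' = 0 := apply_eq_zero_of_pow_sub_smul_apply_eq_zero hf hab (k + 1) l hv hw'
    have hfv : f v = v' + a • v := by simp [v']
    have hfw : f w = w' + b • w := by simp [w']
    have key : B v w = star a * b * B v w := by
      conv_lhs => rw [← hf, hfv, hfw]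
      simp only [map_add, map_smulₛₗ, add_apply, smul_apply, smul_eq_mul, starRingEnd_apply,
        RingHom.id_apply, h₁, h₂, h₃]
      ring
    have : (1 - star a * b) * B v w = 0 := by linear_combination key
    exact (mul_eq_zero.mp this).resolve_left (sub_ne_zero.mpr hab.symm)

theorem apply_eq_zero_of_mem_maxGenEigenspace (hf : ∀ v w, B (f v) (f w) = B v w)
    (hab : star a * b ≠ 1) {v w : V} (hv : v ∈ f.maxGenEigenspace a)
    (hw : w ∈ f.maxGenEigenspace b) : B v w = 0 := by
  obtain ⟨k, hk⟩ := (Module.End.mem_maxGenEigenspace f a v).mp hv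
  obtain ⟨l, hl⟩ := (Module.End.mem_maxGenEigenspace f b w).mp hw
  exact apply_eq_zero_of_pow_sub_smul_apply_eq_zero hf hab k l hk hl

end LinearMap

namespace Module.End

variable {K V : Type*} [Field K] [AddCommGroup V] [Module K V] [FiniteDimensional K V]

theorem two_le_finrank_maxGenEigenspace_sup (f : End K V) {a b : K}
    (hab : {a, b} ≤ f.charpoly.roots) :
    2 ≤ finrank K ↥(f.maxGenEigenspace a ⊔ f.maxGenEigenspace b) := by
  classical
  have hcount (c : K) : f.charpoly.roots.count c = finrank K (f.maxGenEigenspace c) := by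
    rw [count_roots, LinearMap.finrank_maxGenEigenspace_eq]
  rcases eq_or_ne a b with rfl | hne
  · rw [sup_idem, ← hcount]
    simpa using Multiset.count_le_of_le a hab
  · have hpos (c : K) (hc : c ∈ ({a, b} : Multiset K)) : 0 < finrank K (f.maxGenEigenspace c) :=
      hcount c ▸ Multiset.count_pos.mpr (Multiset.mem_of_le hab hc)
    have hsum := Submodule.finrank_sup_add_finrank_inf_eq (f.maxGenEigenspace a)
      (f.maxGenEigenspace b)
    rw [(f.disjoint_genEigenspace hne ⊤ ⊤).eq_bot, finrank_bot] at hsum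
    have := hpos a (by simp)
    have := hpos b (by simp)
    omega

end Module.End

namespace Matrix

variable {n : Type*} [Fintype n]

theorem star_mulVec_dotProduct_mulVec_mulVec {R : Type*} [CommRing R] [StarRing R]
    {A U : Matrix n n R} (hU : Uᴴ * A * U = A) (v w : n → R) :
    star (U *ᵥ v) ⬝ᵥ (A *ᵥ (U *ᵥ w)) = star v ⬝ᵥ (A *ᵥ w) := by
  rw [star_mulVec, ← dotProduct_mulVec, mulVec_mulVec, mulVec_mulVec, hU]

variable [DecidableEq n]

theorem toLinearMapₛₗ₂'_starRingEnd_apply (A : Matrix n n ℂ) (v w : n → ℂ) :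
    toLinearMapₛₗ₂' ℂ (starRingEnd ℂ) (RingHom.id ℂ) A v w = star v ⬝ᵥ (A *ᵥ w) := by
  simp only [toLinearMapₛₗ₂'_apply, dotProduct, mulVec, Finset.mul_sum, smul_eq_mul,
    RingHom.id_apply, Pi.star_apply, RCLike.star_def]
  refine Finset.sum_congr rfl fun i _ => Finset.sum_congr rfl fun j _ => ?_
  ring

theorem not_pair_le_roots_charpoly_of_one_lt_norm {A U : Matrix n n ℂ} (hA : A.IsHermitian)
    (hdet : A.det ≠ 0) (hpos : Fintype.card {i // 0 < hA.eigenvalues i} ≤ 1)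
    (hU : Uᴴ * A * U = A) {a b : ℂ} (ha : 1 < ‖a‖) (hb : 1 < ‖b‖) :
    ¬ {a, b} ≤ U.charpoly.roots := by
  intro hab
  set f : Module.End ℂ (n → ℂ) := toLin' U
  set B := toLinearMapₛₗ₂' ℂ (starRingEnd ℂ) (RingHom.id ℂ) A
  have hf (v w : n → ℂ) : B (f v) (f w) = B v w := by
    simp only [B, toLinearMapₛₗ₂'_starRingEnd_apply, f, toLin'_apply,
      star_mulVec_dotProduct_mulVec_mulVec hU]
  have hne (x y : ℂ) (hx : 1 < ‖x‖) (hy : 1 < ‖y‖) : star x * y ≠ 1 := by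
    intro h
    have := congrArg norm h
    rw [norm_mul, norm_star, norm_one] at this
    nlinarith
  have hiso : ∀ v ∈ f.maxGenEigenspace a ⊔ f.maxGenEigenspace b, star v ⬝ᵥ (A *ᵥ v) = 0 := by
    intro v hv
    obtain ⟨p, hp, r, hr, rfl⟩ := Submodule.mem_sup.mp hv
    rw [← toLinearMapₛₗ₂'_starRingEnd_apply]
    simp only [map_add, LinearMap.add_apply]
    rw [LinearMap.apply_eq_zero_of_mem_maxGenEigenspace hf (hne a a ha ha) hp hp,
      LinearMap.apply_eq_zero_of_mem_maxGenEigenspace hf (hne a b ha hb) hp hr,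
      LinearMap.apply_eq_zero_of_mem_maxGenEigenspace hf (hne b a hb ha) hr hp,
      LinearMap.apply_eq_zero_of_mem_maxGenEigenspace hf (hne b b hb hb) hr hr]
    simp
  have hdim := f.two_le_finrank_maxGenEigenspace_sup (charpoly_toLin' U ▸ hab)
  have := hA.finrank_le_card_pos_eigenvalues_of_isotropic hdet hiso
  omega

end Matrix

theorem Multiset.card_filter_le_one_of_forall_not_pair_le {α : Type*} {s : Multiset α}
    {p : α → Prop} [DecidablePred p] (h : ∀ a b, p a → p b → ¬ {a, b} ≤ s) :
    Multiset.card (s.filter p) ≤ 1 := by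
  by_contra! hcard
  obtain ⟨t, ht⟩ := Multiset.exists_mem_of_ne_zero (s := (s.filter p).powersetCard 2) <| by
    rw [← Multiset.card_pos, Multiset.card_powersetCard]
    exact Nat.choose_pos hcard
  obtain ⟨hts, ht2⟩ := Multiset.mem_powersetCard.mp ht
  obtain ⟨a, b, rfl⟩ := Multiset.card_eq_two.mp ht2
  have hp (c : α) (hc : c ∈ ({a, b} : Multiset α)) : p c :=
    (Multiset.mem_filter.mp (Multiset.mem_of_le hts hc)).2
  exact h a b (hp a (by simp)) (hp b (by simp)) (hts.trans (Multiset.filter_le _ _))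

theorem Polynomial.pair_conj_le_roots_map_ofReal {p : ℝ[X]} {z : ℂ}
    (hz : z ∈ (p.map (algebraMap ℝ ℂ)).roots) (him : z.im ≠ 0) :
    {z, starRingEnd ℂ z} ≤ (p.map (algebraMap ℝ ℂ)).roots := by
  have hconj : (p.map (algebraMap ℝ ℂ)).map (starRingEnd ℂ) = p.map (algebraMap ℝ ℂ) := by
    rw [Polynomial.map_map]
    congr 1
    ext x
    simp
  have hne : z ≠ starRingEnd ℂ z := fun h => him (Complex.conj_eq_iff_im.mp h.symm)
  rw [Multiset.le_iff_subset (by simpa using hne), Multiset.insert_eq_cons, Multiset.cons_subset,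
    Multiset.singleton_subset]
  refine ⟨hz, ?_⟩
  rw [← hconj, (IsAlgClosed.splits _).roots_map]
  exact Multiset.mem_map_of_mem _ hz

/-- Let `L` be a free ℤ-module of finite rank with a nondegenerate symmetric bilinear form of
signature `(1, n)`, given by a Gram matrix `G` (an integer matrix, symmetric, with nonzero
determinant, whose associated real symmetric matrix has exactly one positive eigenvalue,
counted with multiplicity).  If `U` is an integer matrix with `Uᵀ * G * U = G` (an isometry
of the form), then the characteristic polynomial of `U` has at most one complex root of
absolute value greater than 1, counted with algebraic multiplicity, and any such root is
real.  This is the lattice-theoretic content of the theorem of McMullen and Esnault–Srinivas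
on automorphisms of K3 surfaces. -/
theorem isometry_at_most_one_root_outside_unit_disk
    (m : ℕ) (G : Matrix (Fin m) (Fin m) ℤ) (hdet : G.det ≠ 0)
    (hG : (G.map ((↑) : ℤ → ℝ)).IsHermitian)
    (hsig : (Finset.univ.filter fun i => 0 < hG.eigenvalues i).card = 1)
    (U : Matrix (Fin m) (Fin m) ℤ) (hU : U.transpose * G * U = G) :
    Multiset.card
      (((U.charpoly.map (Int.castRingHom ℂ)).roots).filter fun z => 1 < ‖z‖) ≤ 1 ∧
    ∀ z ∈ (U.charpoly.map (Int.castRingHom ℂ)).roots, 1 < ‖z‖ → z.im = 0 := by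
  set Gc : Matrix (Fin m) (Fin m) ℂ := (G.map ((↑) : ℤ → ℝ)).map ((↑) : ℝ → ℂ)
  set Uc : Matrix (Fin m) (Fin m) ℂ := U.map (Int.castRingHom ℂ)
  have hGc : Gc.IsHermitian := hG.map _ fun x => (Complex.conj_ofReal x).symm
  have hGc_eq : Gc = G.map (Int.castRingHom ℂ) := by ext; simp [Gc]
  have hdetc : Gc.det ≠ 0 := by
    rw [hGc_eq, ← RingHom.mapMatrix_apply, ← RingHom.map_det]
    simpa using hdet
  have hposc : Fintype.card {i // 0 < hGc.eigenvalues i} ≤ 1 := by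
    rw [hG.eigenvalues_map_ofReal hGc, Fintype.card_subtype, hsig]
  have hUc : Ucᴴ * Gc * Uc = Gc := by
    have hUcH : Ucᴴ = Uᵀ.map (Int.castRingHom ℂ) := by ext; simp [Uc]
    rw [hUcH, hGc_eq, ← Matrix.map_mul, ← Matrix.map_mul, hU]
  have hq : U.charpoly.map (Int.castRingHom ℂ) =
      (U.charpoly.map (Int.castRingHom ℝ)).map (algebraMap ℝ ℂ) := by
    rw [Polynomial.map_map]
    congr 1
  have key (a b : ℂ) (ha : 1 < ‖a‖) (hb : 1 < ‖b‖) :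
      ¬ {a, b} ≤ (U.charpoly.map (Int.castRingHom ℂ)).roots := by
    rw [← charpoly_map]
    exact not_pair_le_roots_charpoly_of_one_lt_norm hGc hdetc hposc hUc ha hb
  refine ⟨Multiset.card_filter_le_one_of_forall_not_pair_le key, fun z hz hz1 => ?_⟩
  by_contra him
  rw [hq] at hz key
  exact key z (starRingEnd ℂ z) hz1 (by rwa [Complex.norm_conj])
    (Polynomial.pair_conj_le_roots_map_ofReal hz him)
end
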